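/- Suppose a right polygonal loop with folds in ℝ² realizes a cyclic slope list with positive turning T, and let F be the number of its fold points and T' its total turning. Then T' = T − F·π. -/

import Mathlib

/-- A slope: a rational number, or `∞` (encoded by `none`). -/
abbrev Slope := Option ℚ

/-- The primitive integral vector `(n, m)` associated to the slope `m/n`
(in lowest terms), with `(0, 1)` for slope `∞`. -/
def primVec : Slope → ℤ × ℤ
  | none => (0, 1)
  | some q => ((q.den : ℤ), q.num)

/-- The primitive integral vector of a slope, viewed in the plane. -/
noncomputable def primVecR (s : Slope) : ℝ × ℝ :=
  (((primVec s).1 : ℝ), ((primVec s).2 : ℝ))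

/-- Cross product (determinant) of two plane vectors. -/
def cross (u v : ℝ × ℝ) : ℝ := u.1 * v.2 - u.2 * v.1

/-- Dot product of two plane vectors. -/
def dotp (u v : ℝ × ℝ) : ℝ := u.1 * v.1 + u.2 * v.2

/-- The determinant of the primitive integral vectors of two slopes. -/
def primDet (s s' : Slope) : ℤ :=
  (primVec s).1 * (primVec s').2 - (primVec s).2 * (primVec s').1

/-- Euclidean norm of a plane vector. -/
noncomputable def vnorm (u : ℝ × ℝ) : ℝ := Real.sqrt (u.1 ^ 2 + u.2 ^ 2)

/-- The counterclockwise angle from `u` to `w`; when `cross u w > 0` (as at the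
vertices of a right polygonal path) this is the counterclockwise turning angle,
lying in `(0, π)`. -/
noncomputable def turnAngle (u w : ℝ × ℝ) : ℝ :=
  Real.arccos (dotp u w / (vnorm u * vnorm w))

/-- The angle in `[0, π)` of the line through the origin with slope `s`
(with `θ(∞) = π/2`). -/
noncomputable def slopeAngle : Slope → ℝ
  | none => Real.pi / 2
  | some q => if 0 ≤ q then Real.arctan (q : ℝ) else Real.arctan (q : ℝ) + Real.pi

/-- The positive angle `α(s,s')` from slope `s` to slope `s'`: the unique element of
`[0, π)` congruent to `θ(s') − θ(s)` modulo `π`. -/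
noncomputable def posAngle (s s' : Slope) : ℝ :=
  if slopeAngle s' - slopeAngle s < 0 then slopeAngle s' - slopeAngle s + Real.pi
  else slopeAngle s' - slopeAngle s

/-- The positive turning `T = Σ α(sᵢ, sᵢ₊₁)` (indices mod `k`) of the cyclic slope
list `s 0, …, s (k-1)`. -/
noncomputable def posTurning (k : ℕ) (s : ℕ → Slope) : ℝ :=
  ∑ j ∈ Finset.range k, posAngle (s j) (s ((j + 1) % k))

/-- The data of a continuous piecewise-linear path `γ : [0,k] → ℝ²` with `k` edges
(the `j`-th edge, `0 ≤ j < k`, being the image of `[j, j+1]`), subdivided into `m`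
nonconstant affine pieces with breakpoints `t 0 < t 1 < ⋯ < t m`, where
`t 0 = 0`, `t m = k`, every integer time `j ≤ k` is the breakpoint of index `vi j`,
and `γ` is affine on each `[t i, t (i+1)]`. -/
structure PLPathData where
  /-- the number of edges -/
  k : ℕ
  kpos : 0 < k
  /-- the path -/
  γ : ℝ → ℝ × ℝ
  /-- the number of affine pieces -/
  m : ℕ
  /-- the breakpoints -/
  t : ℕ → ℝ
  /-- `vi j` is the index of the breakpoint at integer time `j` -/
  vi : ℕ → ℕ
  t_mono : ∀ i < m, t i < t (i + 1)
  t_first : t 0 = 0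
  t_last : t m = (k : ℝ)
  vi_le : ∀ j ≤ k, vi j ≤ m
  vi_t : ∀ j ≤ k, t (vi j) = (j : ℝ)
  affine : ∀ i < m, ∀ x ∈ Set.Icc (t i) (t (i + 1)),
    γ x = γ (t i) + ((x - t i) / (t (i + 1) - t i)) • (γ (t (i + 1)) - γ (t i))
  nonconst : ∀ i < m, γ (t (i + 1)) ≠ γ (t i)

namespace PLPathData

variable (P : PLPathData)

/-- The direction of motion along the `i`-th affine piece. -/
noncomputable def dir (i : ℕ) : ℝ × ℝ := P.γ (P.t (i + 1)) - P.γ (P.t i)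

/-- The breakpoint of index `i` is a fold: it is interior, does not occur at an
integer time (i.e. is not a vertex time), and the direction of motion reverses
there. -/
def IsFold (i : ℕ) : Prop :=
  0 < i ∧ i < P.m ∧ (∀ j : ℕ, j ≤ P.k → P.t i ≠ (j : ℝ)) ∧
    dotp (P.dir (i - 1)) (P.dir i) < 0

/-- The number of fold points of the path. -/
noncomputable def foldCount : ℕ := {i | P.IsFold i}.ncard

/-- The `j`-th edge, as a subset of the plane. -/
def edge (j : ℕ) : Set (ℝ × ℝ) := P.γ '' Set.Icc (j : ℝ) ((j : ℝ) + 1)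

/-- The path realizes the slope list `s 0, …, s (k-1)`: for each `j < k` the `j`-th
edge is contained in a line of slope `s j`, and consecutive edges have distinct
slopes. -/
def Realizes (s : ℕ → Slope) : Prop :=
  (∀ j < P.k, ∀ x ∈ Set.Icc (j : ℝ) ((j : ℝ) + 1),
    cross (P.γ x - P.γ (j : ℝ)) (primVecR (s j)) = 0) ∧
  (∀ j, j + 1 < P.k → s j ≠ s (j + 1))

/-- The path (realizing the slope list `s`) is right polygonal: no fold point occurs
at (a neighborhood of) a vertex, and at each interior vertex the primitive integral
vectors `v, v'` in the incoming and outgoing directions satisfy `det (v, v') = 1`;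
equivalently, `|det (primVec (s (j-1)), primVec (s j))| = 1` and the incoming and
outgoing directions of motion have positive cross product. -/
def RightPolygonalPathFor (s : ℕ → Slope) : Prop :=
  (∀ i, P.IsFold i → ∀ j : ℕ, j ≤ P.k → P.γ (P.t i) ≠ P.γ (j : ℝ)) ∧
  ∀ j, 1 ≤ j → j < P.k →
    (primDet (s (j - 1)) (s j)).natAbs = 1 ∧
    0 < cross (P.dir (P.vi j - 1)) (P.dir (P.vi j))

/-- The path is a loop: its endpoints coincide. -/
def IsLoop : Prop := P.γ ((P.k : ℝ)) = P.γ 0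

/-- The loop (realizing the cyclic slope list `s`) is right polygonal: it closes up,
no fold point occurs at (a neighborhood of) a vertex, and at each vertex
(cyclically) the primitive integral vectors `v, v'` in the incoming and outgoing
directions satisfy `det (v, v') = 1`. -/
def RightPolygonalLoopFor (s : ℕ → Slope) : Prop :=
  P.IsLoop ∧
  (∀ i, P.IsFold i → ∀ j : ℕ, j ≤ P.k → P.γ (P.t i) ≠ P.γ (j : ℝ)) ∧
  ∀ j, 1 ≤ j → j ≤ P.k →
    (primDet (s (j - 1)) (s (j % P.k))).natAbs = 1 ∧
    0 < cross (P.dir (P.vi j - 1)) (P.dir (P.vi (j % P.k)))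

/-- The path is embedded: distinct edges meet only if consecutive, and then only at
their common vertex, and no point of the plane is traversed three or more times. -/
def EmbeddedPath : Prop :=
  (∀ j j', j + 1 < j' → j' < P.k → P.edge j ∩ P.edge j' = ∅) ∧
  (∀ j, j + 1 < P.k → P.edge j ∩ P.edge (j + 1) = {P.γ ((j : ℝ) + 1)}) ∧
  ∀ x₁ x₂ x₃, x₁ ∈ Set.Icc (0 : ℝ) (P.k : ℝ) → x₂ ∈ Set.Icc (0 : ℝ) (P.k : ℝ) →
    x₃ ∈ Set.Icc (0 : ℝ) (P.k : ℝ) → x₁ < x₂ → x₂ < x₃ →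
    ¬(P.γ x₁ = P.γ x₂ ∧ P.γ x₂ = P.γ x₃)

/-- The loop is embedded: distinct edges meet only if cyclically consecutive, and
then only at their common vertex (vertices, if `k = 2`), and no point of the plane is
traversed three or more times. -/
def EmbeddedLoop : Prop :=
  (∀ j j', j < j' → j' < P.k → j' ≠ j + 1 → ¬(j = 0 ∧ j' + 1 = P.k) →
    P.edge j ∩ P.edge j' = ∅) ∧
  (∀ j, j + 1 < P.k → ¬(j = 0 ∧ j + 2 = P.k) →
    P.edge j ∩ P.edge (j + 1) = {P.γ ((j : ℝ) + 1)}) ∧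
  (2 < P.k → P.edge 0 ∩ P.edge (P.k - 1) = {P.γ 0}) ∧
  (P.k = 2 → P.edge 0 ∩ P.edge 1 = {P.γ 0, P.γ 1}) ∧
  ∀ x₁ x₂ x₃, x₁ ∈ Set.Ico (0 : ℝ) (P.k : ℝ) → x₂ ∈ Set.Ico (0 : ℝ) (P.k : ℝ) →
    x₃ ∈ Set.Ico (0 : ℝ) (P.k : ℝ) → x₁ < x₂ → x₂ < x₃ →
    ¬(P.γ x₁ = P.γ x₂ ∧ P.γ x₂ = P.γ x₃)

/-- The total turning of a (right polygonal) loop with folds: the sum over the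
vertices `j = 1, …, k` (the vertex `k` being the initial vertex) of the
counterclockwise angle from the incoming direction to the outgoing direction,
plus `−π` for each fold point. -/
noncomputable def totalTurning : ℝ :=
  (∑ j ∈ Finset.Icc 1 P.k, turnAngle (P.dir (P.vi j - 1)) (P.dir (P.vi (j % P.k))))
    - (P.foldCount : ℝ) * Real.pi

end PLPathData

lemma slopeAngle_nonneg (a : Slope) : 0 ≤ slopeAngle a := by
  cases a with
  | none => simp only [slopeAngle]; linarith [Real.pi_pos]
  | some q =>
    simp only [slopeAngle]
    split_ifs with h
    · have : Real.arctan 0 ≤ Real.arctan q := Real.arctan_strictMono.monotone (by exact_mod_cast h)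
      simpa using this
    · have := Real.neg_pi_div_two_lt_arctan (q : ℝ)
      have := Real.pi_pos
      linarith

lemma slopeAngle_lt_pi (a : Slope) : slopeAngle a < Real.pi := by
  cases a with
  | none => simp only [slopeAngle]; linarith [Real.pi_pos]
  | some q =>
    simp only [slopeAngle]
    split_ifs with h
    · have := Real.arctan_lt_pi_div_two (q : ℝ)
      linarith [Real.pi_pos]
    · push_neg at h
      have : Real.arctan (q:ℝ) < Real.arctan 0 := Real.arctan_strictMono (by exact_mod_cast h)
      rw [Real.arctan_zero] at this
      linarith

lemma primVecR_eq (a : Slope) : ∃ r : ℝ, r ≠ 0 ∧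
    primVecR a = (r * Real.cos (slopeAngle a), r * Real.sin (slopeAngle a)) := by
  cases a with
  | none =>
    exact ⟨1, one_ne_zero, by simp [primVecR, primVec, slopeAngle]⟩
  | some q =>
    have hs : (0:ℝ) < Real.sqrt (1 + (q:ℝ)^2) := Real.sqrt_pos.mpr (by positivity)
    have hden : (0:ℝ) < (q.den : ℝ) := by exact_mod_cast q.pos
    have hnum : ((q.num : ℝ)) = (q:ℝ) * (q.den : ℝ) := by
      have : ((q:ℝ)) = (q.num : ℝ) / (q.den : ℝ) := by rw [Rat.cast_def]
      rw [this]; field_simp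
    simp only [slopeAngle]
    split_ifs with h
    · refine ⟨(q.den : ℝ) * Real.sqrt (1 + (q:ℝ)^2), by positivity, ?_⟩
      simp only [primVecR, primVec, Real.cos_arctan, Real.sin_arctan, Prod.ext_iff]
      constructor
      · field_simp; norm_cast
      · rw [hnum]; field_simp
    · refine ⟨-((q.den : ℝ) * Real.sqrt (1 + (q:ℝ)^2)), by
        intro hh; rw [neg_eq_zero] at hh; nlinarith, ?_⟩
      simp only [primVecR, primVec, Real.cos_add_pi, Real.sin_add_pi,
        Real.cos_arctan, Real.sin_arctan, Prod.ext_iff]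
      constructor
      · field_simp; norm_cast
      · rw [hnum]; field_simp

lemma turnAngle_eq_posAngle {u w : ℝ × ℝ} {a b : Slope}
    (hu : cross u (primVecR a) = 0) (hw : cross w (primVecR b) = 0)
    (huw : 0 < cross u w) : turnAngle u w = posAngle a b := by
  obtain ⟨r, hr, hva⟩ := primVecR_eq a
  obtain ⟨r', hr', hvb⟩ := primVecR_eq b
  have hb1 := slopeAngle_nonneg a
  have hb2 := slopeAngle_lt_pi a
  have hb3 := slopeAngle_nonneg b
  have hb4 := slopeAngle_lt_pi b
  unfold turnAngle posAngle
  generalize hφ : slopeAngle a = φ at hva hb1 hb2 ⊢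
  generalize hψ : slopeAngle b = ψ at hvb hb3 hb4 ⊢
  have hpφ := Real.sin_sq_add_cos_sq φ
  have hpψ := Real.sin_sq_add_cos_sq ψ
  have hu' : u.1 * Real.sin φ - u.2 * Real.cos φ = 0 := by
    have h0 : r * (u.1 * Real.sin φ - u.2 * Real.cos φ) = 0 := by
      rw [hva] at hu; simp only [cross] at hu; linarith [hu]
    exact (mul_eq_zero.mp h0).resolve_left hr
  have hw' : w.1 * Real.sin ψ - w.2 * Real.cos ψ = 0 := by
    have h0 : r' * (w.1 * Real.sin ψ - w.2 * Real.cos ψ) = 0 := by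
      rw [hvb] at hw; simp only [cross] at hw; linarith [hw]
    exact (mul_eq_zero.mp h0).resolve_left hr'
  obtain ⟨c, hu1, hu2⟩ : ∃ c : ℝ, u.1 = c * Real.cos φ ∧ u.2 = c * Real.sin φ := by
    refine ⟨u.1 * Real.cos φ + u.2 * Real.sin φ, ?_, ?_⟩
    · linear_combination Real.sin φ * hu' - u.1 * hpφ
    · linear_combination (-Real.cos φ) * hu' - u.2 * hpφ
  obtain ⟨d, hw1, hw2⟩ : ∃ d : ℝ, w.1 = d * Real.cos ψ ∧ w.2 = d * Real.sin ψ := by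
    refine ⟨w.1 * Real.cos ψ + w.2 * Real.sin ψ, ?_, ?_⟩
    · linear_combination Real.sin ψ * hw' - w.1 * hpψ
    · linear_combination (-Real.cos ψ) * hw' - w.2 * hpψ
  have hcross : cross u w = c * d * Real.sin (ψ - φ) := by
    simp only [cross, Real.sin_sub, hu1, hu2, hw1, hw2]; ring
  have hdot : dotp u w = c * d * Real.cos (ψ - φ) := by
    simp only [dotp, Real.cos_sub, hu1, hu2, hw1, hw2]; ring
  have hnu : vnorm u = |c| := by
    simp only [vnorm, hu1, hu2]
    rw [show (c * Real.cos φ)^2 + (c * Real.sin φ)^2 = c^2 by linear_combination c^2 * hpφ]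
    exact Real.sqrt_sq_eq_abs c
  have hnw : vnorm w = |d| := by
    simp only [vnorm, hw1, hw2]
    rw [show (d * Real.cos ψ)^2 + (d * Real.sin ψ)^2 = d^2 by linear_combination d^2 * hpψ]
    exact Real.sqrt_sq_eq_abs d
  rw [hcross] at huw
  have hcd : c * d ≠ 0 := by
    intro h0; rw [h0, zero_mul] at huw; exact lt_irrefl 0 huw
  have hδlo : -Real.pi < ψ - φ := by linarith
  have hδhi : ψ - φ < Real.pi := by linarith
  rw [hdot, hnu, hnw, ← abs_mul]
  rcases lt_or_gt_of_ne hcd with hneg | hpos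
  · -- c*d < 0, so sin (ψ - φ) < 0, δ < 0
    have hsin : Real.sin (ψ - φ) < 0 := by
      rcases lt_trichotomy (Real.sin (ψ - φ)) 0 with h|h|h
      · exact h
      · rw [h, mul_zero] at huw; exact absurd huw (lt_irrefl 0)
      · have h2 : c * d * Real.sin (ψ - φ) < 0 := mul_neg_of_neg_of_pos hneg h
        linarith
    have hδneg : ψ - φ < 0 := by
      by_contra hcon; push_neg at hcon
      have : 0 ≤ Real.sin (ψ - φ) := Real.sin_nonneg_of_nonneg_of_le_pi hcon hδhi.le
      linarith
    rw [if_pos hδneg, abs_of_neg hneg]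
    have heq : c * d * Real.cos (ψ - φ) / -(c * d) = Real.cos (ψ - φ + Real.pi) := by
      rw [Real.cos_add_pi, div_neg, mul_div_cancel_left₀ _ hcd]
    rw [heq, Real.arccos_cos (by linarith) (by linarith)]
  · -- c*d > 0, so sin (ψ - φ) > 0, δ > 0
    have hsin : 0 < Real.sin (ψ - φ) := by
      by_contra hcon; push_neg at hcon
      have h2 : c * d * Real.sin (ψ - φ) ≤ 0 := mul_nonpos_of_nonneg_of_nonpos hpos.le hcon
      linarith
    have hδpos : 0 < ψ - φ := by
      by_contra hcon; push_neg at hcon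
      have h2 : Real.sin (-(ψ - φ)) ≥ 0 :=
        Real.sin_nonneg_of_nonneg_of_le_pi (by linarith) (by linarith)
      rw [Real.sin_neg] at h2; linarith
    rw [if_neg (by linarith), abs_of_pos hpos]
    rw [mul_div_cancel_left₀ _ hcd, Real.arccos_cos hδpos.le (by linarith)]

namespace PLPathData

variable (P : PLPathData)

lemma t_le {i i' : ℕ} (h : i ≤ i') (h' : i' ≤ P.m) : P.t i ≤ P.t i' := by
  induction i', h using Nat.le_induction with
  | base => exact le_refl _
  | succ n hn ih =>
      have h1 : n < P.m := Nat.lt_of_succ_le h'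
      exact le_trans (ih h1.le) (P.t_mono n h1).le

lemma t_lt {i i' : ℕ} (h : i < i') (h' : i' ≤ P.m) : P.t i < P.t i' := by
  have h1 : i < P.m := Nat.lt_of_lt_of_le h h'
  exact lt_of_lt_of_le (P.t_mono i h1) (P.t_le (Nat.succ_le_of_lt h) h')

lemma vi_lt_vi {j j' : ℕ} (h : j < j') (h' : j' ≤ P.k) : P.vi j < P.vi j' := by
  by_contra hcon
  push_neg at hcon
  have h1 : P.t (P.vi j') ≤ P.t (P.vi j) := P.t_le hcon (P.vi_le j (le_trans h.le h'))
  rw [P.vi_t j (le_trans h.le h'), P.vi_t j' h'] at h1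
  exact absurd h1 (by exact_mod_cast not_le.mpr (by exact_mod_cast h))

lemma cross_dir {s : ℕ → Slope} (hreal : P.Realizes s) {j i : ℕ} (hj : j < P.k)
    (h1 : P.vi j ≤ i) (h2 : i < P.vi (j + 1)) :
    cross (P.dir i) (primVecR (s j)) = 0 := by
  have hj1 : j + 1 ≤ P.k := hj
  have hvm : P.vi (j + 1) ≤ P.m := P.vi_le _ hj1
  have him : i < P.m := lt_of_lt_of_le h2 hvm
  have ht_lo : (j : ℝ) ≤ P.t i := by
    rw [← P.vi_t j hj.le]; exact P.t_le h1 him.le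
  have ht1_hi : P.t (i + 1) ≤ (j : ℝ) + 1 := by
    have := P.t_le (Nat.succ_le_of_lt h2) hvm
    rw [P.vi_t (j + 1) hj1] at this
    push_cast at this; linarith
  have ht_hi : P.t i ≤ (j : ℝ) + 1 := le_trans (P.t_mono i him).le ht1_hi
  have ht1_lo : (j : ℝ) ≤ P.t (i + 1) := le_trans ht_lo (P.t_mono i him).le
  have e1 := hreal.1 j hj (P.t i) ⟨ht_lo, ht_hi⟩
  have e2 := hreal.1 j hj (P.t (i + 1)) ⟨ht1_lo, ht1_hi⟩
  simp only [cross, PLPathData.dir, Prod.fst_sub, Prod.snd_sub] at e1 e2 ⊢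
  linarith

end PLPathData

/-- If a right polygonal loop with folds realizes a cyclic slope list with positive
turning `T`, and `F` is the number of its fold points and `T'` its total turning,
then `T' = T − F·π`. -/
theorem totalTurning_eq_posTurning_sub_folds
    (P : PLPathData) (s : ℕ → Slope)
    (hreal : P.Realizes s) (hrp : P.RightPolygonalLoopFor s) :
    P.totalTurning = posTurning P.k s - (P.foldCount : ℝ) * Real.pi := by
  obtain ⟨hloop, hnf, hv⟩ := hrp
  unfold PLPathData.totalTurning posTurning
  congr 1
  rw [← Finset.Ico_add_one_right_eq_Icc, Finset.sum_Ico_eq_sum_range]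
  refine Finset.sum_congr rfl fun j hj => ?_
  have hjk : j < P.k := Finset.mem_range.mp hj
  rw [add_comm 1 j]
  have h1j : 1 ≤ j + 1 := Nat.le_add_left 1 j
  have hjk' : j + 1 ≤ P.k := hjk
  obtain ⟨hdet, hcr⟩ := hv (j + 1) h1j hjk'
  simp only [Nat.add_sub_cancel] at hdet hcr ⊢
  have hvlt : P.vi j < P.vi (j + 1) := P.vi_lt_vi (Nat.lt_succ_self j) hjk'
  have hvpos : 1 ≤ P.vi (j + 1) := Nat.one_le_iff_ne_zero.mpr (by omega)
  have hu : cross (P.dir (P.vi (j + 1) - 1)) (primVecR (s j)) = 0 :=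
    P.cross_dir hreal hjk (by omega) (by omega)
  have hjm : (j + 1) % P.k < P.k := Nat.mod_lt _ P.kpos
  have hw : cross (P.dir (P.vi ((j + 1) % P.k))) (primVecR (s ((j + 1) % P.k))) = 0 :=
    P.cross_dir hreal hjm (le_refl _) (P.vi_lt_vi (Nat.lt_succ_self _) hjm)
  exact turnAngle_eq_posAngle hu hw hcr
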